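/- Let {X_s}_{s∈ℕ₀} be a decreasing sequence of Banach spaces with increasing norms and dense intersection X_F ≠ {0}. Let {g_i} ⊂ X₀* and suppose there exists {f_i} ⊂ X_F \ {0} such that for every s and every f ∈ X_s, f = ∑_{i=1}^∞ g_i(f) f_i with convergence in X_s. Define Θ_s := {c : ∑_{i≤n} c_i f_i converges in X_s} with ‖c‖_s := sup_n ‖∑_{i=1}^n c_i f_i‖_s. Then each Θ_s is a CB-space, Θ_{s+1} ⊆ Θ_s with ‖·‖_s ≤ ‖·‖_{s+1}, {g_i|_{X_s}} is a Banach frame for X_s with respect to Θ_s for each s, and {g_i|_{X_F}} is an F-frame for X_F with respect to Θ_F := ⋂_s Θ_s. -/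

import Mathlib

open Filter Topology

noncomputable section

def IsNormOn {X : Type*} [AddCommGroup X] [Module ℝ X] (S : Set X) (N : X → ℝ) : Prop :=
  (0 : X) ∈ S ∧ (∀ c ∈ S, ∀ d ∈ S, c + d ∈ S) ∧ (∀ (a : ℝ), ∀ c ∈ S, a • c ∈ S) ∧
  (∀ c ∈ S, 0 ≤ N c) ∧ (∀ c ∈ S, N c = 0 → c = 0) ∧
  (∀ c ∈ S, ∀ d ∈ S, N (c + d) ≤ N c + N d) ∧
  (∀ (a : ℝ), ∀ c ∈ S, N (a • c) = |a| * N c)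

def IsBanachOn {X : Type*} [AddCommGroup X] [Module ℝ X] (S : Set X) (N : X → ℝ) : Prop :=
  IsNormOn S N ∧ ∀ u : ℕ → X, (∀ n, u n ∈ S) →
    (∀ ε > 0, ∃ M, ∀ m ≥ M, ∀ n ≥ M, N (u m - u n) < ε) →
    ∃ x ∈ S, Tendsto (fun n => N (u n - x)) atTop (nhds 0)

def IsBKOn (S : Set (ℕ → ℝ)) (N : (ℕ → ℝ) → ℝ) : Prop :=
  IsBanachOn S N ∧ ∀ i, ∃ K : ℝ, ∀ c ∈ S, |c i| ≤ K * N c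

def IsScale {X : Type*} [AddCommGroup X] [Module ℝ X] (S : ℕ → Set X) (N : ℕ → X → ℝ) : Prop :=
  (∀ s, IsBanachOn (S s) (N s)) ∧ (∀ s, S (s+1) ⊆ S s) ∧
  (∀ s, ∀ f ∈ S (s+1), N s f ≤ N (s+1) f) ∧
  (∀ s, ∀ f ∈ S s, ∀ ε > 0, ∃ h ∈ ⋂ t, S t, N s (f - h) < ε)

/-!
Through its partial sums, `Θ_s` is a space of convergent sequences in `X_s` with the sup norm.
It is complete: a Cauchy sequence in `Θ_s` converges coordinatewise, since the coordinate `c i`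
is controlled by two consecutive partial sums and `f_i ≠ 0`, and its partial sums then converge
uniformly, so the coordinatewise limit again has a convergent expansion. The synthesis map
`c ↦ ∑ c_i f_i` has norm at most `1` from `Θ_s` to `X_s` and inverts the analysis map
`f ↦ (g_i f)`, which is bounded by the uniform boundedness principle applied to the partial-sum
operators `f ↦ ∑_{i<n} g_i(f) f_i` (pointwise bounded because the expansions converge). On `X_F`
the level-`0` synthesis map serves every level, because a limit in `X_s` is also one in `X_0`.
-/

namespace IsNormOn

variable {X : Type*} [AddCommGroup X] [Module ℝ X] {S : Set X} {N : X → ℝ}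
  (hN : IsNormOn S N) {x y z : X}
include hN

def toSubmodule : Submodule ℝ X where
  carrier := S
  add_mem' hx hy := hN.2.1 _ hx _ hy
  zero_mem' := hN.1
  smul_mem' a _ hx := hN.2.2.1 a _ hx

theorem zero_mem : (0 : X) ∈ S := hN.1

theorem sub_mem (hx : x ∈ S) (hy : y ∈ S) : x - y ∈ S := hN.toSubmodule.sub_mem hx hy

theorem smul_mem (a : ℝ) (hx : x ∈ S) : a • x ∈ S := hN.2.2.1 a x hx

theorem sum_mem {ι : Type*} {t : Finset ι} {u : ι → X} (hu : ∀ i ∈ t, u i ∈ S) :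
    ∑ i ∈ t, u i ∈ S :=
  hN.toSubmodule.sum_mem hu

theorem nonneg (hx : x ∈ S) : 0 ≤ N x := hN.2.2.2.1 x hx

theorem eq_zero_of_map_eq_zero (hx : x ∈ S) (h : N x = 0) : x = 0 := hN.2.2.2.2.1 x hx h

theorem pos (hx : x ∈ S) (hx0 : x ≠ 0) : 0 < N x :=
  (hN.nonneg hx).lt_of_ne fun h => hx0 (hN.eq_zero_of_map_eq_zero hx h.symm)

theorem add_le (hx : x ∈ S) (hy : y ∈ S) : N (x + y) ≤ N x + N y := hN.2.2.2.2.2.1 x hx y hy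

theorem map_smul (a : ℝ) (hx : x ∈ S) : N (a • x) = |a| * N x := hN.2.2.2.2.2.2 a x hx

theorem map_zero : N 0 = 0 := by simpa using hN.map_smul 0 hN.zero_mem

theorem map_neg (hx : x ∈ S) : N (-x) = N x := by simpa using hN.map_smul (-1) hx

theorem map_sub_rev (hx : x ∈ S) (hy : y ∈ S) : N (x - y) = N (y - x) := by
  rw [← hN.map_neg (hN.sub_mem hx hy), neg_sub]

theorem sub_le (hx : x ∈ S) (hy : y ∈ S) : N (x - y) ≤ N x + N y := by
  simpa [sub_eq_add_neg, hN.map_neg hy] using hN.add_le hx (hN.smul_mem (-1) hy)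

theorem le_sub_add (hx : x ∈ S) (hy : y ∈ S) : N x ≤ N (x - y) + N y := by
  simpa using hN.add_le (hN.sub_mem hx hy) hy

theorem sub_le_sub_add_sub (hx : x ∈ S) (hy : y ∈ S) (hz : z ∈ S) :
    N (x - z) ≤ N (x - y) + N (y - z) := by
  simpa using hN.add_le (hN.sub_mem hx hy) (hN.sub_mem hy hz)

theorem sum_le {ι : Type*} {t : Finset ι} {u : ι → X} (hu : ∀ i ∈ t, u i ∈ S) :
    N (∑ i ∈ t, u i) ≤ ∑ i ∈ t, N (u i) := by
  classical
  induction t using Finset.induction with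
  | empty => simp [hN.map_zero]
  | insert a t hat ih =>
    rw [Finset.sum_insert hat, Finset.sum_insert hat]
    have hu' : ∀ i ∈ t, u i ∈ S := fun i hi => hu i (Finset.mem_insert_of_mem hi)
    exact (hN.add_le (hu a (Finset.mem_insert_self a t)) (hN.sum_mem hu')).trans
      (add_le_add le_rfl (ih hu'))

@[reducible] def toNormedAddCommGroup (hN : IsNormOn S N) : NormedAddCommGroup hN.toSubmodule :=
  AddGroupNorm.toNormedAddCommGroup
    { toFun := fun x => N x
      map_zero' := hN.map_zero
      add_le' := fun x y => hN.add_le x.2 y.2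
      neg' := fun x => hN.map_neg x.2
      eq_zero_of_map_eq_zero' := fun x hx => Subtype.ext (hN.eq_zero_of_map_eq_zero x.2 hx) }

end IsNormOn

def NormTendsto {X : Type*} [AddCommGroup X] (N : X → ℝ) (u : ℕ → X) (x : X) : Prop :=
  Tendsto (fun n => N (x - u n)) atTop (𝓝 0)

namespace NormTendsto

variable {X : Type*} [AddCommGroup X] [Module ℝ X] {S : Set X} {N : X → ℝ}
  {u v : ℕ → X} {x y : X}

theorem unique (hN : IsNormOn S N) (hu : ∀ n, u n ∈ S) (hx : x ∈ S) (hy : y ∈ S)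
    (hux : NormTendsto N u x) (huy : NormTendsto N u y) : x = y := by
  have hle : ∀ n, N (x - y) ≤ N (x - u n) + N (y - u n) := fun n => by
    rw [hN.map_sub_rev hy (hu n)]
    exact hN.sub_le_sub_add_sub hx (hu n) hy
  have hzero : N (x - y) ≤ 0 := by simpa using ge_of_tendsto' (Tendsto.add hux huy) hle
  exact sub_eq_zero.1 <| hN.eq_zero_of_map_eq_zero (hN.sub_mem hx hy)
    (le_antisymm hzero (hN.nonneg (hN.sub_mem hx hy)))

theorem add (hN : IsNormOn S N) (hu : ∀ n, u n ∈ S) (hv : ∀ n, v n ∈ S) (hx : x ∈ S)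
    (hy : y ∈ S) (hux : NormTendsto N u x) (hvy : NormTendsto N v y) :
    NormTendsto N (fun n => u n + v n) (x + y) := by
  refine squeeze_zero (fun n => hN.nonneg ?_) (fun n => ?_) (by simpa using Tendsto.add hux hvy)
  · exact hN.sub_mem (hN.toSubmodule.add_mem hx hy) (hN.toSubmodule.add_mem (hu n) (hv n))
  · rw [add_sub_add_comm]
    exact hN.add_le (hN.sub_mem hx (hu n)) (hN.sub_mem hy (hv n))

theorem const_smul (hN : IsNormOn S N) (hu : ∀ n, u n ∈ S) (hx : x ∈ S)
    (hux : NormTendsto N u x) (a : ℝ) : NormTendsto N (fun n => a • u n) (a • x) := by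
  have heq : ∀ n, N (a • x - a • u n) = |a| * N (x - u n) := fun n => by
    rw [← smul_sub, hN.map_smul a (hN.sub_mem hx (hu n))]
  unfold NormTendsto
  simp only [heq]
  simpa using Tendsto.const_mul |a| hux

theorem le_of_eventually_le (hN : IsNormOn S N) (hu : ∀ n, u n ∈ S) (hx : x ∈ S)
    (hux : NormTendsto N u x) {b : ℝ} (hb : ∀ᶠ n in atTop, N (u n) ≤ b) : N x ≤ b := by
  refine ge_of_tendsto (by simpa using hux.add_const b) (hb.mono fun n hn => ?_)
  linarith [hN.le_sub_add hx (hu n)]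

theorem bddAbove (hN : IsNormOn S N) (hu : ∀ n, u n ∈ S) (hx : x ∈ S)
    (hux : NormTendsto N u x) : BddAbove (Set.range fun n => N (u n)) := by
  obtain ⟨b, hb⟩ := hux.bddAbove_range
  refine ⟨b + N x, Set.forall_mem_range.2 fun n => ?_⟩
  have := hN.le_sub_add (hu n) hx
  rw [hN.map_sub_rev (hu n) hx] at this
  linarith [hb (Set.mem_range_self n)]

theorem cauchy (hN : IsNormOn S N) (hu : ∀ n, u n ∈ S) (hx : x ∈ S)
    (hux : NormTendsto N u x) : ∀ ε > 0, ∃ J, ∀ m ≥ J, ∀ n ≥ J, N (u m - u n) < ε := by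
  intro ε hε
  obtain ⟨J, hJ⟩ := (hux.eventually (gt_mem_nhds (half_pos hε))).exists_forall_of_atTop
  refine ⟨J, fun m hm n hn => ?_⟩
  have := hN.sub_le_sub_add_sub (hu m) hx (hu n)
  rw [hN.map_sub_rev (hu m) hx] at this
  linarith [hJ m hm, hJ n hn]

theorem mono {S' : Set X} {N' : X → ℝ} (hN : IsNormOn S N) (hN' : IsNormOn S' N')
    (hSS' : S ⊆ S') (hNN' : ∀ x ∈ S, N' x ≤ N x) (hu : ∀ n, u n ∈ S) (hx : x ∈ S)
    (hux : NormTendsto N u x) : NormTendsto N' u x :=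
  squeeze_zero (fun n => hN'.nonneg (hSS' (hN.sub_mem hx (hu n))))
    (fun n => hNN' _ (hN.sub_mem hx (hu n))) hux

end NormTendsto

namespace IsBanachOn

variable {X : Type*} [AddCommGroup X] [Module ℝ X] {S : Set X} {N : X → ℝ}
  (hB : IsBanachOn S N) {u : ℕ → X}
include hB

theorem exists_normTendsto (hu : ∀ n, u n ∈ S)
    (hcau : ∀ ε > 0, ∃ J, ∀ m ≥ J, ∀ n ≥ J, N (u m - u n) < ε) :
    ∃ x ∈ S, NormTendsto N u x := by
  obtain ⟨x, hx, hux⟩ := hB.2 u hu hcau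
  exact ⟨x, hx, hux.congr fun n => hB.1.map_sub_rev (hu n) hx⟩

theorem exists_normTendsto_of_uniform {v : ℕ → ℕ → X} (hv : ∀ k n, v k n ∈ S)
    (hvc : ∀ k, ∃ x ∈ S, NormTendsto N (v k) x) (hu : ∀ n, u n ∈ S)
    (hvu : ∀ ε > 0, ∃ k, ∀ n, N (v k n - u n) ≤ ε) :
    ∃ x ∈ S, NormTendsto N u x := by
  have hN := hB.1
  refine hB.exists_normTendsto hu fun ε hε => ?_
  obtain ⟨k, hk⟩ := hvu (ε / 4) (by positivity)
  obtain ⟨x, hx, hvx⟩ := hvc k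
  obtain ⟨J, hJ⟩ := hvx.cauchy hN (hv k) hx (ε / 4) (by positivity)
  refine ⟨J, fun m hm n hn => ?_⟩
  have h₁ := hN.sub_le_sub_add_sub (hu m) (hv k m) (hu n)
  have h₂ := hN.sub_le_sub_add_sub (hv k m) (hv k n) (hu n)
  rw [hN.map_sub_rev (hu m) (hv k m)] at h₁
  linarith [hk m, hk n, hJ m hm n hn]

theorem exists_uniform_bound {ι : Type*} (P : ι → X →ₗ[ℝ] X)
    (hPS : ∀ i, ∀ x ∈ S, P i x ∈ S) (hPbdd : ∀ i, ∃ C, ∀ x ∈ S, N (P i x) ≤ C * N x)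
    (hPpt : ∀ x ∈ S, ∃ C, ∀ i, N (P i x) ≤ C) :
    ∃ B, ∀ i, ∀ x ∈ S, N (P i x) ≤ B * N x := by
  have hN := hB.1
  let _ := hN.toNormedAddCommGroup
  let _ : NormedSpace ℝ hN.toSubmodule :=
    ⟨fun a x => (hN.map_smul a x.2).le⟩
  have : CompleteSpace hN.toSubmodule := by
    refine Metric.complete_of_cauchySeq_tendsto fun u hu => ?_
    have hcau : ∀ ε > 0, ∃ J, ∀ m ≥ J, ∀ n ≥ J, N (u m - u n) < ε := fun ε hε => by
      obtain ⟨J, hJ⟩ := Metric.cauchySeq_iff.1 hu ε hε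
      refine ⟨J, fun m hm n hn => ?_⟩
      have := hJ m hm n hn
      rw [dist_eq_norm] at this
      exact this
    obtain ⟨x, hx, hux⟩ := hB.2 (fun n => u n) (fun n => (u n).2) hcau
    exact ⟨⟨x, hx⟩, tendsto_iff_norm_sub_tendsto_zero.2 hux⟩
  let Q : ι → hN.toSubmodule →L[ℝ] hN.toSubmodule := fun i =>
    ((P i).restrict (p := hN.toSubmodule) (q := hN.toSubmodule) (hPS i)).mkContinuous
      (hPbdd i).choose fun x => (hPbdd i).choose_spec x x.2
  obtain ⟨B, hQB⟩ := banach_steinhaus (g := Q) fun x => hPpt x x.2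
  refine ⟨B, fun i x hx => ?_⟩
  exact ((Q i).le_opNorm ⟨x, hx⟩).trans (mul_le_mul_of_nonneg_right (hQB i) (norm_nonneg _))

end IsBanachOn

section CoeffSpace

variable {X : Type*} [AddCommGroup X] [Module ℝ X]

def partialSum (e : ℕ → X) (n : ℕ) : (ℕ → ℝ) →ₗ[ℝ] X where
  toFun c := ∑ i ∈ Finset.range n, c i • e i
  map_add' c d := by simp [add_smul, Finset.sum_add_distrib]
  map_smul' a c := by simp [mul_smul, Finset.smul_sum]

theorem partialSum_apply (e : ℕ → X) (n : ℕ) (c : ℕ → ℝ) :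
    partialSum e n c = ∑ i ∈ Finset.range n, c i • e i := rfl

theorem partialSum_succ_sub (e : ℕ → X) (c : ℕ → ℝ) (i : ℕ) :
    partialSum e (i + 1) c - partialSum e i c = c i • e i := by
  simp [partialSum_apply, Finset.sum_range_succ]

theorem partialSum_single (e : ℕ → X) {i n : ℕ} (hin : i < n) :
    partialSum e n (Pi.single i 1) = e i := by
  classical
  simp [partialSum_apply, Pi.single_apply, hin]

theorem partialSum_truncate (e : ℕ → X) (c : ℕ → ℝ) (m n : ℕ) :
    partialSum e m (fun j => if j < n then c j else 0) = partialSum e (min m n) c := by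
  simp only [partialSum_apply, ite_smul, zero_smul]
  rw [← Finset.sum_filter]
  congr 1
  ext j
  simp

/-- The paper's `Θ_s`, normed by `coeffNorm`. -/
def coeffSpace (S : Set X) (N : X → ℝ) (e : ℕ → X) : Set (ℕ → ℝ) :=
  {c | ∃ x ∈ S, NormTendsto N (fun n => partialSum e n c) x}

def coeffNorm (N : X → ℝ) (e : ℕ → X) (c : ℕ → ℝ) : ℝ :=
  ⨆ n, N (partialSum e n c)

variable {S : Set X} {N : X → ℝ} {e : ℕ → X}

theorem partialSum_mem (hN : IsNormOn S N) (he : ∀ i, e i ∈ S) (n : ℕ) (c : ℕ → ℝ) :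
    partialSum e n c ∈ S :=
  hN.sum_mem (t := Finset.range n) fun i _ => hN.smul_mem (c i) (he i)

theorem NormTendsto.unique_of_partialSum (hN : IsNormOn S N) (he : ∀ i, e i ∈ S)
    {c : ℕ → ℝ} {x y : X} (hx : x ∈ S) (hy : y ∈ S)
    (hcx : NormTendsto N (fun n => partialSum e n c) x)
    (hcy : NormTendsto N (fun n => partialSum e n c) y) : x = y :=
  hcx.unique hN (partialSum_mem hN he · c) hx hy hcy

def coeffSubmodule (hN : IsNormOn S N) (he : ∀ i, e i ∈ S) : Submodule ℝ (ℕ → ℝ) where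
  carrier := coeffSpace S N e
  zero_mem' := ⟨0, hN.zero_mem, by simp [NormTendsto, hN.map_zero]⟩
  add_mem' := by
    rintro c d ⟨x, hx, hcx⟩ ⟨y, hy, hdy⟩
    refine ⟨x + y, hN.toSubmodule.add_mem hx hy, ?_⟩
    simpa only [map_add] using
      hcx.add hN (partialSum_mem hN he · c) (partialSum_mem hN he · d) hx hy hdy
  smul_mem' := by
    rintro a c ⟨x, hx, hcx⟩
    refine ⟨a • x, hN.smul_mem a hx, ?_⟩
    simpa only [map_smul] using hcx.const_smul hN (partialSum_mem hN he · c) hx a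

theorem bddAbove_partialSum (hN : IsNormOn S N) (he : ∀ i, e i ∈ S) {c : ℕ → ℝ}
    (hc : c ∈ coeffSpace S N e) : BddAbove (Set.range fun n => N (partialSum e n c)) :=
  let ⟨_, hx, hcx⟩ := hc
  hcx.bddAbove hN (partialSum_mem hN he · c) hx

theorem le_coeffNorm (hN : IsNormOn S N) (he : ∀ i, e i ∈ S) {c : ℕ → ℝ}
    (hc : c ∈ coeffSpace S N e) (n : ℕ) : N (partialSum e n c) ≤ coeffNorm N e c :=
  le_ciSup (bddAbove_partialSum hN he hc) n

theorem coeffNorm_nonneg (hN : IsNormOn S N) (he : ∀ i, e i ∈ S) (c : ℕ → ℝ) :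
    0 ≤ coeffNorm N e c :=
  Real.iSup_nonneg fun n => hN.nonneg (partialSum_mem hN he n c)

theorem coeffNorm_le (hN : IsNormOn S N) (he : ∀ i, e i ∈ S) {c : ℕ → ℝ} {b : ℝ}
    (hb : ∀ n, N (partialSum e n c) ≤ b) : coeffNorm N e c ≤ b :=
  Real.iSup_le hb ((hN.nonneg (partialSum_mem hN he 0 c)).trans (hb 0))

theorem NormTendsto.le_coeffNorm (hN : IsNormOn S N) (he : ∀ i, e i ∈ S) {c : ℕ → ℝ}
    {x : X} (hx : x ∈ S) (hcx : NormTendsto N (fun n => partialSum e n c) x) :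
    N x ≤ coeffNorm N e c :=
  hcx.le_of_eventually_le hN (partialSum_mem hN he · c) hx
    (Eventually.of_forall (_root_.le_coeffNorm hN he ⟨x, hx, hcx⟩))

theorem abs_mul_le_coeffNorm (hN : IsNormOn S N) (he : ∀ i, e i ∈ S) {c : ℕ → ℝ}
    (hc : c ∈ coeffSpace S N e) (i : ℕ) : |c i| * N (e i) ≤ 2 * coeffNorm N e c := by
  rw [← hN.map_smul _ (he i), ← partialSum_succ_sub]
  linarith [hN.sub_le (partialSum_mem hN he (i + 1) c) (partialSum_mem hN he i c),
    le_coeffNorm hN he hc (i + 1), le_coeffNorm hN he hc i]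

theorem isNormOn_coeffSpace (hN : IsNormOn S N) (he : ∀ i, e i ∈ S) (he0 : ∀ i, e i ≠ 0) :
    IsNormOn (coeffSpace S N e) (coeffNorm N e) := by
  let hsub := coeffSubmodule hN he
  refine ⟨hsub.zero_mem, fun c hc d hd => hsub.add_mem hc hd, fun a c hc => hsub.smul_mem a hc,
    fun c _ => coeffNorm_nonneg hN he c, fun c hc h0 => ?_, fun c hc d hd => ?_, fun a c _ => ?_⟩
  · have hsum : ∀ n, partialSum e n c = 0 := fun n =>
      hN.eq_zero_of_map_eq_zero (partialSum_mem hN he n c)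
        (le_antisymm (h0 ▸ le_coeffNorm hN he hc n) (hN.nonneg (partialSum_mem hN he n c)))
    funext i
    have hi : c i • e i = 0 := by rw [← partialSum_succ_sub, hsum, hsum, sub_zero]
    exact (smul_eq_zero.1 hi).resolve_right (he0 i)
  · refine coeffNorm_le hN he fun n => ?_
    rw [map_add]
    exact (hN.add_le (partialSum_mem hN he n c) (partialSum_mem hN he n d)).trans
      (add_le_add (le_coeffNorm hN he hc n) (le_coeffNorm hN he hd n))
  · simp only [coeffNorm, map_smul, Real.mul_iSup_of_nonneg (abs_nonneg a)]
    exact congrArg _ (funext fun n => hN.map_smul a (partialSum_mem hN he n c))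

theorem partialSum_le_sum (hN : IsNormOn S N) (he : ∀ i, e i ∈ S) (n : ℕ) (c : ℕ → ℝ) :
    N (partialSum e n c) ≤ ∑ i ∈ Finset.range n, |c i| * N (e i) :=
  (hN.sum_le (t := Finset.range n) fun i _ => hN.smul_mem (c i) (he i)).trans_eq
    (Finset.sum_congr rfl fun i _ => hN.map_smul _ (he i))

theorem normTendsto_partialSum_of_tendsto_apply (hN : IsNormOn S N) (he : ∀ i, e i ∈ S)
    {u : ℕ → ℕ → ℝ} {c : ℕ → ℝ} (huc : ∀ i, Tendsto (fun k => u k i) atTop (𝓝 (c i)))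
    (n : ℕ) : NormTendsto N (fun k => partialSum e n (u k)) (partialSum e n c) := by
  have hlim : Tendsto (fun k => ∑ i ∈ Finset.range n, |(c - u k) i| * N (e i))
      atTop (𝓝 0) := by
    simpa using tendsto_finsetSum (Finset.range n) fun i _ =>
      (((tendsto_const_nhds (x := c i)).sub (huc i)).abs.mul_const (N (e i)))
  refine squeeze_zero (fun k => ?_) (fun k => ?_) hlim
  · exact hN.nonneg (hN.sub_mem (partialSum_mem hN he n c) (partialSum_mem hN he n (u k)))
  · rw [← map_sub]
    exact partialSum_le_sum hN he n _

variable {u : ℕ → ℕ → ℝ}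

theorem exists_tendsto_apply_of_cauchy (hN : IsNormOn S N) (he : ∀ i, e i ∈ S)
    (he0 : ∀ i, e i ≠ 0) (hu : ∀ k, u k ∈ coeffSpace S N e)
    (hcau : ∀ ε > 0, ∃ K, ∀ m ≥ K, ∀ n ≥ K, coeffNorm N e (u m - u n) < ε) (i : ℕ) :
    ∃ l, Tendsto (fun k => u k i) atTop (𝓝 l) := by
  have hei := hN.pos (he i) (he0 i)
  refine cauchySeq_tendsto_of_complete (Metric.cauchySeq_iff.2 fun ε hε => ?_)
  obtain ⟨K, hK⟩ := hcau (ε * N (e i) / 2) (by positivity)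
  refine ⟨K, fun m hm n hn => ?_⟩
  have := abs_mul_le_coeffNorm hN he ((coeffSubmodule hN he).sub_mem (hu m) (hu n)) i
  rw [Real.dist_eq, ← Pi.sub_apply]
  nlinarith [hK m hm n hn]

theorem isBanachOn_coeffSpace (hB : IsBanachOn S N) (he : ∀ i, e i ∈ S) (he0 : ∀ i, e i ≠ 0) :
    IsBanachOn (coeffSpace S N e) (coeffNorm N e) := by
  have hN := hB.1
  refine ⟨isNormOn_coeffSpace hN he he0, fun u hu hcau => ?_⟩
  choose c hc using exists_tendsto_apply_of_cauchy hN he he0 hu hcau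
  have huniform : ∀ ε > 0, ∃ K, ∀ k ≥ K, ∀ n,
      N (partialSum e n (u k) - partialSum e n c) ≤ ε := by
    intro ε hε
    obtain ⟨K, hK⟩ := hcau ε hε
    refine ⟨K, fun k hk n => ?_⟩
    have hlim := normTendsto_partialSum_of_tendsto_apply hN he hc n
    refine ge_of_tendsto (by simpa using hlim.const_add ε)
      ((eventually_ge_atTop K).mono fun l hl => ?_)
    have hkl : N (partialSum e n (u k) - partialSum e n (u l)) < ε := by
      rw [← map_sub]
      exact (le_coeffNorm hN he ((coeffSubmodule hN he).sub_mem (hu k) (hu l)) n).trans_lt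
        (hK k hk l hl)
    have := hN.sub_le_sub_add_sub (partialSum_mem hN he n (u k))
      (partialSum_mem hN he n (u l)) (partialSum_mem hN he n c)
    rw [hN.map_sub_rev (partialSum_mem hN he n (u l)) (partialSum_mem hN he n c)] at this
    linarith
  have hcT : c ∈ coeffSpace S N e := by
    refine hB.exists_normTendsto_of_uniform (v := fun k n => partialSum e n (u k))
      (fun k n => partialSum_mem hN he n (u k)) (fun k => hu k)
      (fun n => partialSum_mem hN he n c) fun ε hε => ?_
    obtain ⟨K, hK⟩ := huniform ε hε
    exact ⟨K, hK K le_rfl⟩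
  refine ⟨c, hcT, Metric.tendsto_atTop.2 fun ε hε => ?_⟩
  obtain ⟨K, hK⟩ := huniform (ε / 2) (half_pos hε)
  refine ⟨K, fun k hk => ?_⟩
  have : coeffNorm N e (u k - c) ≤ ε / 2 :=
    coeffNorm_le hN he fun n => by rw [map_sub]; exact hK k hk n
  rw [Real.dist_0_eq_abs, abs_of_nonneg (coeffNorm_nonneg hN he _)]
  linarith

theorem isBKOn_coeffSpace (hB : IsBanachOn S N) (he : ∀ i, e i ∈ S) (he0 : ∀ i, e i ≠ 0) :
    IsBKOn (coeffSpace S N e) (coeffNorm N e) := by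
  refine ⟨isBanachOn_coeffSpace hB he he0, fun i => ⟨2 / N (e i), fun c hc => ?_⟩⟩
  rw [div_mul_eq_mul_div, le_div_iff₀ (hB.1.pos (he i) (he0 i))]
  exact abs_mul_le_coeffNorm hB.1 he hc i

theorem single_mem_coeffSpace (hN : IsNormOn S N) (he : ∀ i, e i ∈ S) (i : ℕ) :
    Pi.single i 1 ∈ coeffSpace S N e := by
  refine ⟨e i, he i, tendsto_const_nhds.congr' ?_⟩
  filter_upwards [eventually_gt_atTop i] with n hn
  rw [partialSum_single e hn, sub_self, hN.map_zero]

theorem tendsto_coeffNorm_sub_truncate (hN : IsNormOn S N) (he : ∀ i, e i ∈ S) {c : ℕ → ℝ}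
    (hc : c ∈ coeffSpace S N e) :
    Tendsto (fun n => coeffNorm N e (c - fun j => if j < n then c j else 0)) atTop (𝓝 0) := by
  obtain ⟨x, hx, hcx⟩ := hc
  refine Metric.tendsto_atTop.2 fun ε hε => ?_
  obtain ⟨J, hJ⟩ := hcx.cauchy hN (partialSum_mem hN he · c) hx (ε / 2) (half_pos hε)
  refine ⟨J, fun n hn => ?_⟩
  have : coeffNorm N e (c - fun j => if j < n then c j else 0) ≤ ε / 2 := by
    refine coeffNorm_le hN he fun m => ?_
    rw [map_sub, partialSum_truncate]
    rcases le_total m n with hmn | hnm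
    · rw [min_eq_left hmn, sub_self, hN.map_zero]
      positivity
    · rw [min_eq_right hnm]
      exact (hJ m (hn.trans hnm) n hn).le
  rw [Real.dist_0_eq_abs, abs_of_nonneg (coeffNorm_nonneg hN he _)]
  linarith

theorem exists_linearMap_normTendsto (hN : IsNormOn S N) (he : ∀ i, e i ∈ S) :
    ∃ V : (ℕ → ℝ) →ₗ[ℝ] X, ∀ c ∈ coeffSpace S N e,
      V c ∈ S ∧ NormTendsto N (fun n => partialSum e n c) (V c) := by
  choose L hLS hL using fun c : coeffSubmodule hN he => c.2
  have hmem := (partialSum_mem hN he · ·)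
  let L' : coeffSubmodule hN he →ₗ[ℝ] X :=
    { toFun := L
      map_add' := fun c d => (hL (c + d)).unique_of_partialSum hN he (hLS _)
        (hN.toSubmodule.add_mem (hLS c) (hLS d)) <| by
          simpa only [Submodule.coe_add, map_add] using
            (hL c).add hN (hmem · c) (hmem · d) (hLS c) (hLS d) (hL d)
      map_smul' := fun a c => (hL (a • c)).unique_of_partialSum hN he (hLS _)
        (hN.smul_mem a (hLS c)) <| by
          simpa only [SetLike.val_smul, map_smul, RingHom.id_apply] using
            (hL c).const_smul hN (hmem · c) (hLS c) a }
  obtain ⟨V, hV⟩ := LinearMap.exists_extend L'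
  refine ⟨V, fun c hc => ?_⟩
  have hVc : V c = L ⟨c, hc⟩ := LinearMap.congr_fun hV ⟨c, hc⟩
  exact hVc ▸ ⟨hLS _, hL _⟩

theorem coeffSpace_subset {S' : Set X} {N' : X → ℝ} (hN : IsNormOn S N) (hN' : IsNormOn S' N')
    (hSS' : S ⊆ S') (hNN' : ∀ x ∈ S, N' x ≤ N x) (he : ∀ i, e i ∈ S) :
    coeffSpace S N e ⊆ coeffSpace S' N' e := fun _ ⟨x, hx, hcx⟩ =>
  ⟨x, hSS' hx, hcx.mono hN hN' hSS' hNN' (partialSum_mem hN he · _) hx⟩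

theorem coeffNorm_le_coeffNorm {S' : Set X} {N' : X → ℝ} (hN : IsNormOn S N)
    (hN' : IsNormOn S' N') (hSS' : S ⊆ S') (hNN' : ∀ x ∈ S, N' x ≤ N x) (he : ∀ i, e i ∈ S)
    {c : ℕ → ℝ} (hc : c ∈ coeffSpace S N e) : coeffNorm N' e c ≤ coeffNorm N e c :=
  coeffNorm_le hN' (fun i => hSS' (he i)) fun n =>
    (hNN' _ (partialSum_mem hN he n c)).trans (le_coeffNorm hN he hc n)

section Frame

variable {g : ℕ → X →ₗ[ℝ] ℝ}

theorem exists_coeffNorm_le (hB : IsBanachOn S N) (he : ∀ i, e i ∈ S)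
    (hg : ∀ i, ∃ C, ∀ f ∈ S, |g i f| ≤ C * N f)
    (hexp : ∀ f ∈ S, NormTendsto N (fun n => partialSum e n fun i => g i f) f) :
    ∃ B, ∀ f ∈ S, coeffNorm N e (fun i => g i f) ≤ B * N f := by
  have hN := hB.1
  choose C hC using hg
  have hPbdd : ∀ n, ∀ f ∈ S, N (partialSum e n fun i => g i f) ≤
      (∑ i ∈ Finset.range n, C i * N (e i)) * N f := fun n f hf => by
    refine (partialSum_le_sum hN he n _).trans ?_
    rw [Finset.sum_mul]
    refine Finset.sum_le_sum fun i _ => ?_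
    calc |g i f| * N (e i) ≤ C i * N f * N (e i) :=
          mul_le_mul_of_nonneg_right (hC i f hf) (hN.nonneg (he i))
      _ = C i * N (e i) * N f := by ring
  obtain ⟨B, hBn⟩ := hB.exists_uniform_bound (fun n => (partialSum e n).comp (LinearMap.pi g))
    (fun n f _ => partialSum_mem hN he n _) (fun n => ⟨_, hPbdd n⟩)
    (fun f hf => ⟨_, le_coeffNorm hN he ⟨f, hf, hexp f hf⟩⟩)
  exact ⟨B, fun f hf => coeffNorm_le hN he fun n => hBn n f hf⟩

theorem exists_banachFrame (hB : IsBanachOn S N) (he : ∀ i, e i ∈ S)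
    (hg : ∀ i, ∃ C, ∀ f ∈ S, |g i f| ≤ C * N f)
    (hexp : ∀ f ∈ S, NormTendsto N (fun n => partialSum e n fun i => g i f) f) :
    ∃ A > 0, ∃ B : ℝ, A ≤ B ∧
      (∀ f ∈ S, (fun i => g i f) ∈ coeffSpace S N e ∧
        A * N f ≤ coeffNorm N e (fun i => g i f) ∧ coeffNorm N e (fun i => g i f) ≤ B * N f) ∧
      ∃ V : (ℕ → ℝ) →ₗ[ℝ] X, (∀ c ∈ coeffSpace S N e, V c ∈ S) ∧
        (∃ K : ℝ, ∀ c ∈ coeffSpace S N e, N (V c) ≤ K * coeffNorm N e c) ∧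
        (∀ f ∈ S, V (fun i => g i f) = f) := by
  have hN := hB.1
  obtain ⟨B, hBf⟩ := exists_coeffNorm_le hB he hg hexp
  obtain ⟨V, hV⟩ := exists_linearMap_normTendsto hN he
  refine ⟨1, one_pos, max B 1, le_max_right _ _, fun f hf => ⟨⟨f, hf, hexp f hf⟩, ?_, ?_⟩,
    V, fun c hc => (hV c hc).1, ⟨1, fun c hc => ?_⟩, fun f hf => ?_⟩
  · rw [one_mul]
    exact (hexp f hf).le_coeffNorm hN he hf
  · exact (hBf f hf).trans (mul_le_mul_of_nonneg_right (le_max_left _ _) (hN.nonneg hf))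
  · rw [one_mul]
    exact (hV c hc).2.le_coeffNorm hN he (hV c hc).1
  · have hc := hV _ ⟨f, hf, hexp f hf⟩
    exact hc.2.unique_of_partialSum hN he hc.1 hf (hexp f hf)

theorem exists_fFrame {S : ℕ → Set X} {N : ℕ → X → ℝ} (hN : ∀ s, IsNormOn (S s) (N s))
    (hS0 : ∀ s, S s ⊆ S 0) (hN0 : ∀ s, ∀ f ∈ S s, N 0 f ≤ N s f) (he : ∀ s i, e i ∈ S s)
    (hexp : ∀ f ∈ S 0, NormTendsto (N 0) (fun n => partialSum e n fun i => g i f) f) :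
    ∃ V : (ℕ → ℝ) →ₗ[ℝ] X,
      (∀ c ∈ ⋂ s, coeffSpace (S s) (N s) e, V c ∈ ⋂ s, S s) ∧
      (∀ s, ∃ K : ℝ, ∀ c ∈ ⋂ t, coeffSpace (S t) (N t) e, N s (V c) ≤ K * coeffNorm (N s) e c) ∧
      (∀ f ∈ ⋂ s, S s, V (fun i => g i f) = f) := by
  obtain ⟨V, hV⟩ := exists_linearMap_normTendsto (hN 0) (he 0)
  -- The level-`0` sum of `c` is also its level-`s` sum, since convergence in `N s` is stronger.
  have hVs : ∀ s, ∀ c ∈ coeffSpace (S s) (N s) e,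
      V c ∈ S s ∧ NormTendsto (N s) (fun n => partialSum e n c) (V c) := by
    intro s c ⟨x, hx, hcx⟩
    have hc0 := hV c (coeffSpace_subset (hN s) (hN 0) (hS0 s) (hN0 s) (he s) ⟨x, hx, hcx⟩)
    obtain rfl : x = V c := NormTendsto.unique_of_partialSum (hN 0) (he 0) (hS0 s hx) hc0.1
      (hcx.mono (hN s) (hN 0) (hS0 s) (hN0 s) (partialSum_mem (hN s) (he s) · c) hx) hc0.2
    exact ⟨hx, hcx⟩
  refine ⟨V, fun c hc => Set.mem_iInter.2 fun s => (hVs s c (Set.mem_iInter.1 hc s)).1,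
    fun s => ⟨1, fun c hc => ?_⟩, fun f hf => ?_⟩
  · obtain ⟨hcS, hcV⟩ := hVs s c (Set.mem_iInter.1 hc s)
    rw [one_mul]
    exact hcV.le_coeffNorm (hN s) (he s) hcS
  · have hf0 := Set.mem_iInter.1 hf 0
    have hc := hV _ ⟨f, hf0, hexp f hf0⟩
    exact hc.2.unique_of_partialSum (hN 0) (he 0) hc.1 hf0 (hexp f hf0)

end Frame

end CoeffSpace

theorem construction_from_expansions_general
    {X : Type*} [AddCommGroup X] [Module ℝ X]
    (S : ℕ → Set X) (N : ℕ → X → ℝ) (hX : IsScale S N)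
    (g : ℕ → X →ₗ[ℝ] ℝ)
    (hgc : ∀ i, ∃ C : ℝ, ∀ f ∈ S 0, |g i f| ≤ C * N 0 f)
    (fv : ℕ → X) (hfv : ∀ i, fv i ∈ ⋂ s, S s) (hfvne : ∀ i, fv i ≠ 0)
    (hexp : ∀ s, ∀ f ∈ S s,
      Tendsto (fun n => N s (f - ∑ i ∈ Finset.range n, g i f • fv i)) atTop (nhds 0))
    (T : ℕ → Set (ℕ → ℝ))
    (hT : ∀ s, T s = {c | ∃ h ∈ S s,
      Tendsto (fun n => N s (h - ∑ i ∈ Finset.range n, c i • fv i)) atTop (nhds 0)})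
    (NT : ℕ → (ℕ → ℝ) → ℝ)
    (hNT : ∀ s c, NT s c = ⨆ n : ℕ, N s (∑ i ∈ Finset.range n, c i • fv i)) :
    (∀ s, IsBKOn (T s) (NT s)) ∧
    (∀ s, (∀ i, Pi.single i (1 : ℝ) ∈ T s) ∧
      ∀ c ∈ T s, Tendsto (fun n => NT s (c - fun j => if j < n then c j else 0))
        atTop (nhds 0)) ∧
    (∀ s, T (s + 1) ⊆ T s) ∧
    (∀ s, ∀ c ∈ T (s + 1), NT s c ≤ NT (s + 1) c) ∧
    (∀ s, ∃ A > 0, ∃ B : ℝ, A ≤ B ∧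
      (∀ f ∈ S s, (fun i => g i f) ∈ T s ∧
        A * N s f ≤ NT s (fun i => g i f) ∧ NT s (fun i => g i f) ≤ B * N s f) ∧
      ∃ V : (ℕ → ℝ) →ₗ[ℝ] X, (∀ c ∈ T s, V c ∈ S s) ∧
        (∃ K : ℝ, ∀ c ∈ T s, N s (V c) ≤ K * NT s c) ∧
        (∀ f ∈ S s, V (fun i => g i f) = f)) ∧
    (∃ V : (ℕ → ℝ) →ₗ[ℝ] X,
      (∀ c ∈ ⋂ s, T s, V c ∈ ⋂ s, S s) ∧
      (∀ s, ∃ K : ℝ, ∀ c ∈ ⋂ t, T t, N s (V c) ≤ K * NT s c) ∧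
      (∀ f ∈ ⋂ s, S s, V (fun i => g i f) = f)) := by
  obtain ⟨hB, hanti, hmono, -⟩ := hX
  obtain rfl : T = fun s => coeffSpace (S s) (N s) fv := funext hT
  obtain rfl : NT = fun s => coeffNorm (N s) fv := funext fun s => funext (hNT s)
  have hN : ∀ s, IsNormOn (S s) (N s) := fun s => (hB s).1
  have hfvS : ∀ s i, fv i ∈ S s := fun s i => Set.mem_iInter.1 (hfv i) s
  have hS0 : ∀ s, S s ⊆ S 0 := fun s => antitone_nat_of_succ_le hanti (Nat.zero_le s)
  have hN0 : ∀ s, ∀ f ∈ S s, N 0 f ≤ N s f := by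
    intro s
    induction s with
    | zero => exact fun _ _ => le_rfl
    | succ s ih => exact fun f hf => (ih f (hanti s hf)).trans (hmono s f hf)
  have hg : ∀ s i, ∃ C, ∀ f ∈ S s, |g i f| ≤ C * N s f := fun s i => by
    obtain ⟨C, hC⟩ := hgc i
    refine ⟨max C 0, fun f hf => (hC f (hS0 s hf)).trans ?_⟩
    exact mul_le_mul (le_max_left _ _) (hN0 s f hf) ((hN 0).nonneg (hS0 s hf)) (le_max_right _ _)
  exact ⟨fun s => isBKOn_coeffSpace (hB s) (hfvS s) hfvne,
    fun s => ⟨single_mem_coeffSpace (hN s) (hfvS s),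
      fun c hc => tendsto_coeffNorm_sub_truncate (hN s) (hfvS s) hc⟩,
    fun s => coeffSpace_subset (hN (s + 1)) (hN s) (hanti s) (hmono s) (hfvS (s + 1)),
    fun s c hc => coeffNorm_le_coeffNorm (hN (s + 1)) (hN s) (hanti s) (hmono s) (hfvS (s + 1)) hc,
    fun s => exists_banachFrame (hB s) (hfvS s) (hg s) (hexp s),
    exists_fFrame hN hS0 hN0 hfvS (hexp 0)⟩

/-- given a Banach scale `{X_s}` with dense nonzero intersection `X_F`,
functionals `(g i) ⊂ X₀*` and nonzero vectors `(fv i) ⊂ X_F` with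
`f = ∑ g i f • fv i` in `X_s` for every `f ∈ X_s` and every `s`, the sequence spaces
`Θ_s := {c : ∑ c i • fv i converges in X_s}` with norm `sup_n ‖∑_{i<n} c i • fv i‖_s`
form a decreasing scale of CB-spaces with increasing norms, `(g i)|_{X_s}` is a Banach
frame for `X_s` w.r.t. `Θ_s` for every `s`, and `(g i)|_{X_F}` is an F-frame for `X_F`
with respect to `Θ_F = ⋂ Θ_s`. -/
theorem construction_from_expansions
    {X : Type*} [AddCommGroup X] [Module ℝ X]
    (S : ℕ → Set X) (N : ℕ → X → ℝ) (hX : IsScale S N)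
    (hne : ∃ f ∈ ⋂ s, S s, f ≠ (0 : X))
    (g : ℕ → X →ₗ[ℝ] ℝ)
    (hgc : ∀ i, ∃ C : ℝ, ∀ f ∈ S 0, |g i f| ≤ C * N 0 f)
    (fv : ℕ → X) (hfv : ∀ i, fv i ∈ ⋂ s, S s) (hfvne : ∀ i, fv i ≠ 0)
    (hexp : ∀ s, ∀ f ∈ S s,
      Tendsto (fun n => N s (f - ∑ i ∈ Finset.range n, g i f • fv i)) atTop (nhds 0))
    (T : ℕ → Set (ℕ → ℝ))
    (hT : ∀ s, T s = {c | ∃ h ∈ S s,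
      Tendsto (fun n => N s (h - ∑ i ∈ Finset.range n, c i • fv i)) atTop (nhds 0)})
    (NT : ℕ → (ℕ → ℝ) → ℝ)
    (hNT : ∀ s c, NT s c = ⨆ n : ℕ, N s (∑ i ∈ Finset.range n, c i • fv i)) :
    (∀ s, IsBKOn (T s) (NT s)) ∧
    (∀ s, (∀ i, Pi.single i (1 : ℝ) ∈ T s) ∧
      ∀ c ∈ T s, Tendsto (fun n => NT s (c - fun j => if j < n then c j else 0))
        atTop (nhds 0)) ∧
    (∀ s, T (s + 1) ⊆ T s) ∧
    (∀ s, ∀ c ∈ T (s + 1), NT s c ≤ NT (s + 1) c) ∧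
    (∀ s, ∃ A > 0, ∃ B : ℝ, A ≤ B ∧
      (∀ f ∈ S s, (fun i => g i f) ∈ T s ∧
        A * N s f ≤ NT s (fun i => g i f) ∧ NT s (fun i => g i f) ≤ B * N s f) ∧
      ∃ V : (ℕ → ℝ) →ₗ[ℝ] X, (∀ c ∈ T s, V c ∈ S s) ∧
        (∃ K : ℝ, ∀ c ∈ T s, N s (V c) ≤ K * NT s c) ∧
        (∀ f ∈ S s, V (fun i => g i f) = f)) ∧
    (∃ V : (ℕ → ℝ) →ₗ[ℝ] X,
      (∀ c ∈ ⋂ s, T s, V c ∈ ⋂ s, S s) ∧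
      (∀ s, ∃ K : ℝ, ∀ c ∈ ⋂ t, T t, N s (V c) ≤ K * NT s c) ∧
      (∀ f ∈ ⋂ s, S s, V (fun i => g i f) = f)) :=
  construction_from_expansions_general S N hX g hgc fv hfv hfvne hexp T hT NT hNT
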